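/- Let N=(V,E,s,t) be a unit-capacity point-to-point network and F a k-CF of N. For any positive integers k_1,…,k_n with k_1+⋯+k_n = k, there exist pairwise disjoint sets F_1,…,F_n ⊆ F whose union is F such that for each i, F_i is a k_i-CF of the network N with F_1 ∪ ⋯ ∪ F_{i−1} deleted. -/

import Mathlib

/-- A point-to-point network: a finite directed multigraph with edge set
`edges`, endpoint maps `tail`/`head`, source `s` and sink `t`; every edge has
unit capacity. -/
structure Network (V : Type) (ε : Type) where
  edges : Finset ε
  tail : ε → V
  head : ε → V
  s : V
  t : V

namespace Network

variable {V ε : Type} [DecidableEq ε]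

/-- `p` is a nonempty directed walk from `u` to `v` using edges of `N`. -/
def IsWalk (N : Network V ε) (u v : V) (p : List ε) : Prop :=
  p ≠ [] ∧ (∀ e ∈ p, e ∈ N.edges) ∧
  (∀ i, ∀ h : i + 1 < p.length,
    N.head (p.get ⟨i, Nat.lt_of_succ_lt h⟩) = N.tail (p.get ⟨i + 1, h⟩)) ∧
  (∀ h : 0 < p.length, N.tail (p.get ⟨0, h⟩) = u) ∧
  (∀ h : 0 < p.length, N.head (p.get ⟨p.length - 1, Nat.sub_lt h Nat.one_pos⟩) = v)

/-- An `s`-`t` path: an edge-simple walk from the source to the sink. -/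
def IsPath (N : Network V ε) (p : List ε) : Prop :=
  N.IsWalk N.s N.t p ∧ p.Nodup

/-- `v` is reachable from `u` by a directed walk (or `u = v`). -/
def Reach (N : Network V ε) (u v : V) : Prop :=
  u = v ∨ ∃ p, N.IsWalk u v p

/-- Reachability within the subgraph induced by the vertex set `S`. -/
def ReachIn (N : Network V ε) (S : Set V) (u v : V) : Prop :=
  u = v ∨ ∃ p, N.IsWalk u v p ∧ ∀ e ∈ p, N.tail e ∈ S ∧ N.head e ∈ S

/-- An edge-simple directed cycle. -/
def IsCycle (N : Network V ε) (p : List ε) : Prop :=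
  ∃ u, N.IsWalk u u p ∧ p.Nodup

def Acyclic (N : Network V ε) : Prop := ∀ p, ¬ N.IsCycle p

/-- A collection of pairwise edge-disjoint `s`-`t` paths (an integral flow in a
unit-capacity network). -/
def IsFlowList (N : Network V ε) (fs : List (List ε)) : Prop :=
  (∀ p ∈ fs, N.IsPath p) ∧ fs.Pairwise fun p q => ∀ e ∈ p, e ∉ q

def HasFlow (N : Network V ε) (n : ℕ) : Prop :=
  ∃ fs, N.IsFlowList fs ∧ fs.length = n

/-- The maximum-flow value `C_N(s,t)`: the maximum number of pairwise
edge-disjoint directed `s`-`t` paths. -/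
noncomputable def maxFlow (N : Network V ε) : ℕ :=
  sSup {n | N.HasFlow n}

/-- Delete the edges of `F` from the network. -/
def del (N : Network V ε) (F : Finset ε) : Network V ε :=
  { N with edges := N.edges \ F }

/-- `F` is a `k`-th order capacity factor of `N`:
`C_{N\F} ≤ C_N − k`, and `C_{N\F'} > C_N − k` for every proper `F' ⊊ F`. -/
def IsKCF (N : Network V ε) (k : ℕ) (F : Finset ε) : Prop :=
  F.Nonempty ∧ F ⊆ N.edges ∧ (N.del F).maxFlow + k ≤ N.maxFlow ∧
    ∀ F' ⊂ F, N.maxFlow < (N.del F').maxFlow + k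

/-- `F` is a capacity factor of `N`: deleting `F` decreases the maximum flow,
while deleting any proper subset does not. -/
def IsCF (N : Network V ε) (F : Finset ε) : Prop :=
  F.Nonempty ∧ F ⊆ N.edges ∧ (N.del F).maxFlow < N.maxFlow ∧
    ∀ F' ⊂ F, (N.del F').maxFlow = N.maxFlow

/-- The set of edges used by a flow given as a list of paths. -/
def usedEdges (fs : List (List ε)) : Finset ε := fs.flatten.toFinset

/-- Residual network w.r.t. a set of used (unit-capacity) edges: used edges
are reversed, unused edges keep their direction. -/
def residual (N : Network V ε) (used : Finset ε) : Network V ε :=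
  { edges := N.edges,
    tail := fun e => if e ∈ used then N.head e else N.tail e,
    head := fun e => if e ∈ used then N.tail e else N.head e,
    s := N.s, t := N.t }

/-- The same network with sink replaced by `v`. -/
def withSink (N : Network V ε) (v : V) : Network V ε := { N with t := v }

end Network

/-! Split off one summand at a time. If `F` is an `(a + b)`-CF, a minimal `F₁ ⊆ F` whose deletion
costs at least `a` units of flow is an `a`-CF; as a single edge carries at most one unit, it costs
exactly `a`, and then the minimality of `F` makes `F \ F₁` a `b`-CF of `N` with `F₁` deleted. -/

namespace Network

variable {V ε : Type} [DecidableEq ε] {N : Network V ε}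

@[simp]
lemma del_del (N : Network V ε) (A B : Finset ε) : (N.del A).del B = N.del (A ∪ B) := by
  simp only [del, Finset.sdiff_sdiff_left']
  rw [Finset.sdiff_union_distrib]

@[simp]
lemma del_empty (N : Network V ε) : N.del ∅ = N := by
  simp [del]

lemma IsWalk.del {F : Finset ε} {u v : V} {p : List ε} (h : N.IsWalk u v p)
    (hF : ∀ e ∈ p, e ∉ F) : (N.del F).IsWalk u v p :=
  let ⟨hne, hE, hrest⟩ := h
  ⟨hne, fun e he => Finset.mem_sdiff.mpr ⟨hE e he, hF e he⟩, hrest⟩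

lemma IsFlowList.length_le_card {fs : List (List ε)} (h : N.IsFlowList fs) :
    fs.length ≤ N.edges.card := by
  obtain ⟨hpaths, hdisj⟩ := h
  have hnodup : fs.flatten.Nodup := List.nodup_flatten.mpr ⟨fun p hp => (hpaths p hp).2, hdisj⟩
  calc fs.length
      ≤ fs.flatten.length := by
        rw [List.length_flatten, ← List.length_map List.length]
        exact List.length_le_sum_of_one_le _ fun m hm => by
          obtain ⟨p, hp, rfl⟩ := List.mem_map.mp hm
          exact List.length_pos_iff.mpr (hpaths p hp).1.1
    _ = fs.flatten.toFinset.card := (List.toFinset_card_of_nodup hnodup).symm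
    _ ≤ N.edges.card := Finset.card_le_card fun e he => by
        obtain ⟨p, hp, hep⟩ := List.mem_flatten.mp (List.mem_toFinset.mp he)
        exact (hpaths p hp).1.2.1 e hep

lemma bddAbove_hasFlow (N : Network V ε) : BddAbove {n | N.HasFlow n} :=
  ⟨N.edges.card, fun _ ⟨_, hfs, hlen⟩ => hlen ▸ hfs.length_le_card⟩

lemma hasFlow_maxFlow (N : Network V ε) : N.HasFlow N.maxFlow :=
  Nat.sSup_mem ⟨0, show N.HasFlow 0 from ⟨[], ⟨by simp, by simp⟩, rfl⟩⟩ N.bddAbove_hasFlow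

lemma HasFlow.le_maxFlow {n : ℕ} (h : N.HasFlow n) : n ≤ N.maxFlow :=
  le_csSup N.bddAbove_hasFlow h

/-- Edge-disjoint paths share no edge, so at most one of them is lost with `e`. -/
lemma maxFlow_le_maxFlow_del_singleton_add_one (N : Network V ε) (e : ε) :
    N.maxFlow ≤ (N.del {e}).maxFlow + 1 := by
  obtain ⟨fs, ⟨hpaths, hdisj⟩, hlen⟩ := N.hasFlow_maxFlow
  have hkept : (N.del {e}).HasFlow (fs.filter fun p => !decide (e ∈ p)).length := by
    refine ⟨_, ⟨fun p hp => ?_, hdisj.sublist List.filter_sublist⟩, rfl⟩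
    obtain ⟨hmem, hep⟩ := List.mem_filter.mp hp
    refine ⟨(hpaths p hmem).1.del fun x hx hxe => ?_, (hpaths p hmem).2⟩
    rw [Finset.mem_singleton] at hxe
    simp_all
  have hlost : (fs.filter fun p => decide (e ∈ p)).length ≤ 1 := by
    have hpw := hdisj.filter (fun p => decide (e ∈ p))
    have hall : ∀ p ∈ fs.filter (fun p => decide (e ∈ p)), e ∈ p := fun p hp => by
      simpa using (List.mem_filter.mp hp).2
    generalize fs.filter (fun p => decide (e ∈ p)) = l at hpw hall
    match l, hpw, hall with
    | [], _, _ | [_], _, _ => simp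
    | p :: q :: _, hpw, hall =>
      exact absurd (hall q (by simp)) (List.rel_of_pairwise_cons hpw (by simp) e (hall p (by simp)))
  have := List.length_eq_length_filter_add (l := fs) (fun p => decide (e ∈ p))
  have := hkept.le_maxFlow
  omega

variable {k a b : ℕ} {F F₁ : Finset ε}

lemma IsKCF.pos (h : N.IsKCF k F) : 0 < k := by
  have := h.2.2.2 ∅ (Finset.empty_ssubset.mpr h.1)
  rw [del_empty] at this
  omega

/-- One edge fewer than `F` loses fewer than `k` units, and one edge costs at most one unit. -/
lemma IsKCF.maxFlow_del_add_eq (h : N.IsKCF k F) : (N.del F).maxFlow + k = N.maxFlow := by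
  obtain ⟨⟨e, he⟩, -, hdrop, hmin⟩ := h
  have hlt := hmin (F.erase e) (Finset.erase_ssubset he)
  have hstep := (N.del (F.erase e)).maxFlow_le_maxFlow_del_singleton_add_one e
  rw [del_del, Finset.union_comm, ← Finset.insert_eq, Finset.insert_erase he] at hstep
  omega

lemma exists_isKCF_subset (ha : 0 < a) (hF : F ⊆ N.edges)
    (hdrop : (N.del F).maxFlow + a ≤ N.maxFlow) : ∃ F₁ ⊆ F, N.IsKCF a F₁ := by
  obtain ⟨F₁, hsub, hmin⟩ := exists_minimal_le_of_wellFoundedLT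
    (fun F' => (N.del F').maxFlow + a ≤ N.maxFlow) F hdrop
  refine ⟨F₁, hsub, Finset.nonempty_iff_ne_empty.mpr ?_, hsub.trans hF, hmin.prop,
    fun F' hlt => not_le.mp (hmin.not_prop_of_lt hlt)⟩
  rintro rfl
  have := hmin.prop
  rw [del_empty] at this
  omega

lemma IsKCF.sdiff (hF : N.IsKCF (a + b) F) (hF₁ : N.IsKCF a F₁) (hsub : F₁ ⊆ F) (hb : 0 < b) :
    (N.del F₁).IsKCF b (F \ F₁) := by
  have hexactF := hF.maxFlow_del_add_eq
  have hexactF₁ := hF₁.maxFlow_del_add_eq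
  refine ⟨Finset.sdiff_nonempty.mpr fun h => ?_, Finset.sdiff_subset_sdiff hF.2.1 le_rfl, ?_,
    fun F' hlt => ?_⟩
  · rw [Finset.Subset.antisymm hsub h] at hexactF₁
    omega
  · rw [del_del, Finset.union_sdiff_of_subset hsub]
    omega
  · obtain ⟨x, hx, hxF'⟩ := Finset.exists_of_ssubset hlt
    have hunion : F₁ ∪ F' ⊂ F := by
      refine (Finset.ssubset_iff_of_subset ?_).mpr ⟨x, (Finset.mem_sdiff.mp hx).1, ?_⟩
      · exact Finset.union_subset hsub (hlt.subset.trans Finset.sdiff_subset)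
      · simpa [hxF'] using (Finset.mem_sdiff.mp hx).2
    have := hF.2.2.2 _ hunion
    rw [del_del]
    omega

lemma IsKCF.exists_split (hF : N.IsKCF (a + b) F) (ha : 0 < a) (hb : 0 < b) :
    ∃ F₁ ⊆ F, N.IsKCF a F₁ ∧ (N.del F₁).IsKCF b (F \ F₁) := by
  obtain ⟨F₁, hsub, hF₁⟩ := exists_isKCF_subset ha hF.2.1 (by have := hF.2.2.1; omega)
  exact ⟨F₁, hsub, hF₁, hF.sdiff hF₁ hsub hb⟩

def IsKCFDecomposition (N : Network V ε) {n : ℕ} (ks : Fin n → ℕ) (F : Finset ε)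
    (Fs : Fin n → Finset ε) : Prop :=
  (∀ i, Fs i ⊆ F) ∧
    (∀ i j, i ≠ j → Disjoint (Fs i) (Fs j)) ∧
    Finset.univ.biUnion Fs = F ∧
    ∀ i, (N.del ((Finset.univ.filter fun j => j < i).biUnion Fs)).IsKCF (ks i) (Fs i)

lemma isKCFDecomposition_one {ks : Fin 1 → ℕ} (hF : N.IsKCF (ks 0) F) :
    N.IsKCFDecomposition ks F fun _ => F := by
  refine ⟨fun _ => subset_rfl, fun i j hij => absurd (Subsingleton.elim i j) hij, ?_, fun i => ?_⟩
  · simp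
  · simpa [Fin.fin_one_eq_zero i] using hF

lemma biUnion_univ_cons {n : ℕ} (A : Finset ε) (Fs : Fin n → Finset ε) :
    Finset.univ.biUnion (Fin.cons A Fs : Fin (n + 1) → Finset ε) = A ∪ Finset.univ.biUnion Fs := by
  ext
  simp [Fin.exists_fin_succ]

lemma biUnion_filter_lt_cons {n : ℕ} (A : Finset ε) (Fs : Fin n → Finset ε) (i : Fin n) :
    (Finset.univ.filter fun j => j < i.succ).biUnion (Fin.cons A Fs : Fin (n + 1) → Finset ε) =
      A ∪ (Finset.univ.filter fun j => j < i).biUnion Fs := by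
  ext
  simp [Fin.exists_fin_succ, Fin.succ_pos]

lemma IsKCFDecomposition.cons {n : ℕ} {ks : Fin n → ℕ} {Fs : Fin n → Finset ε}
    (hsub : F₁ ⊆ F) (hF₁ : N.IsKCF a F₁) (hrest : (N.del F₁).IsKCFDecomposition ks (F \ F₁) Fs) :
    N.IsKCFDecomposition (Fin.cons a ks) F (Fin.cons F₁ Fs) := by
  obtain ⟨hsubs, hdisj, hunion, hkcf⟩ := hrest
  have hdisj₁ (j : Fin n) : Disjoint F₁ (Fs j) := Finset.disjoint_sdiff.mono_right (hsubs j)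
  refine ⟨Fin.cases hsub fun j => (hsubs j).trans Finset.sdiff_subset, ?_, ?_, ?_⟩
  · refine Fin.cases (Fin.cases (absurd rfl) fun j _ => hdisj₁ j) fun i => Fin.cases
      (fun _ => (hdisj₁ i).symm) fun j hij => hdisj i j (fun h => hij (congrArg _ h))
  · rw [biUnion_univ_cons, hunion, Finset.union_sdiff_of_subset hsub]
  · refine Fin.cases ?_ fun j => ?_
    · simpa using hF₁
    · simpa [biUnion_filter_lt_cons] using hkcf j

theorem exists_isKCFDecomposition {n : ℕ} (ks : Fin (n + 1) → ℕ) (hpos : ∀ i, 0 < ks i)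
    (N : Network V ε) (F : Finset ε) (hF : N.IsKCF (∑ i, ks i) F) :
    ∃ Fs, N.IsKCFDecomposition ks F Fs := by
  induction n generalizing N F with
  | zero => exact ⟨_, isKCFDecomposition_one (by simpa using hF)⟩
  | succ n ih =>
    rw [Fin.sum_univ_succ] at hF
    obtain ⟨F₁, hsub, hF₁, hrest⟩ :=
      hF.exists_split (hpos 0) (Finset.sum_pos (fun i _ => hpos i.succ) Finset.univ_nonempty)
    obtain ⟨Fs, hFs⟩ := ih (Fin.tail ks) (fun i => hpos i.succ) _ _ hrest
    exact ⟨_, Fin.cons_self_tail ks ▸ hFs.cons hsub hF₁⟩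

end Network

open Network

theorem kCF_decompose_general_general {V ε : Type} [DecidableEq ε]
    (N : Network V ε) (k : ℕ) (F : Finset ε) (hF : N.IsKCF k F)
    (n : ℕ) (ks : Fin n → ℕ)
    (hpos : ∀ i, 0 < ks i) (hsum : ∑ i, ks i = k) :
    ∃ Fs : Fin n → Finset ε,
      (∀ i, Fs i ⊆ F) ∧
      (∀ i j, i ≠ j → Disjoint (Fs i) (Fs j)) ∧
      Finset.univ.biUnion Fs = F ∧
      ∀ i, (N.del ((Finset.univ.filter fun j => j < i).biUnion Fs)).IsKCF
        (ks i) (Fs i) := by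
  cases n with
  | zero => exact absurd hF.pos (by simp [← hsum])
  | succ n => exact exists_isKCFDecomposition ks hpos N F (hsum ▸ hF)

/-- A `k`-CF can be decomposed along any composition `k = k₁ + ⋯ + kₙ` into
pairwise disjoint pieces, the `i`-th being a `kᵢ`-CF of the network with the
previous pieces deleted. -/
theorem kCF_decompose_general {V ε : Type} [DecidableEq ε]
    (N : Network V ε) (k : ℕ) (F : Finset ε) (hF : N.IsKCF k F)
    (n : ℕ) (hn : 0 < n) (ks : Fin n → ℕ)
    (hpos : ∀ i, 0 < ks i) (hsum : ∑ i, ks i = k) :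
    ∃ Fs : Fin n → Finset ε,
      (∀ i, Fs i ⊆ F) ∧
      (∀ i j, i ≠ j → Disjoint (Fs i) (Fs j)) ∧
      Finset.univ.biUnion Fs = F ∧
      ∀ i, (N.del ((Finset.univ.filter fun j => j < i).biUnion Fs)).IsKCF
        (ks i) (Fs i) :=
  kCF_decompose_general_general N k F hF n ks hpos hsum
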